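/- arXiv:2411.19596 — 2 statements merged into one kernel-verified Lean document; each statement's English description precedes it below -/
import Mathlib

section
/- Let V be a 2-dimensional real inner product space with orthonormal bases (a₁,a₂) and (b₁,b₂), and set x = ⟪a₁,b₁⟫² with 0 < x < 1. Starting from the consensus state where one citizen holds b₁ and probes the other's perspective (a₁,a₂) before updating in her own, the probability of returning to b₁, namely ⟪b₁,a₁⟫²·⟪a₁,b₁⟫² + ⟪b₁,a₂⟫²·⟪a₂,b₁⟫² = x² + (1−x)², is strictly less than 1; equivalently, consensus is lost with the strictly positive probability 2x(1−x). (Paper's Lemma 1.) -/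
open scoped RealInnerProductSpace

/-- Lemma 1: Starting from the consensus eigenstate `b₁`,
probing the other perspective `(a₁,a₂)` and updating returns to `b₁` with
probability `⟪b₁,a₁⟫²⟪a₁,b₁⟫² + ⟪b₁,a₂⟫²⟪a₂,b₁⟫² = x² + (1−x)² < 1`:
consensus is lost with strictly positive probability `2x(1−x)`. -/
theorem consensus_lost_with_positive_probability {V : Type*}
    [NormedAddCommGroup V] [InnerProductSpace ℝ V]
    (a b : OrthonormalBasis (Fin 2) ℝ V)
    (x : ℝ) (hx : x = ⟪a 0, b 0⟫ ^ 2) (h0 : 0 < x) (h1 : x < 1) :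
    ⟪b 0, a 0⟫ ^ 2 * ⟪a 0, b 0⟫ ^ 2 + ⟪b 0, a 1⟫ ^ 2 * ⟪a 1, b 0⟫ ^ 2 =
        x ^ 2 + (1 - x) ^ 2 ∧
      x ^ 2 + (1 - x) ^ 2 < 1 ∧
      1 - (x ^ 2 + (1 - x) ^ 2) = 2 * x * (1 - x) ∧ 0 < 2 * x * (1 - x) := by
  have hsum : ∑ i, ⟪b 0, a i⟫ * ⟪a i, b 0⟫ = ⟪b 0, b 0⟫ := a.sum_inner_mul_inner _ _
  have hb : ⟪(b 0 : V), b 0⟫ = 1 := by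
    have := b.orthonormal.1 0
    rw [real_inner_self_eq_norm_sq, this]; norm_num
  simp [Fin.sum_univ_two, hb] at hsum
  have hsymm0 : ⟪(b 0 : V), a 0⟫ = ⟪a 0, b 0⟫ := real_inner_comm _ _
  have hsymm1 : ⟪(b 0 : V), a 1⟫ = ⟪a 1, b 0⟫ := real_inner_comm _ _
  have ha1 : ⟪(a 1 : V), b 0⟫ ^ 2 = 1 - x := by
    rw [hsymm0, hsymm1] at hsum; rw [hx]; nlinarith [hsum]
  refine ⟨by rw [hsymm0, hsymm1, ← hx, ha1]; ring, by nlinarith, by ring, by nlinarith⟩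
end

section
/- Let V be a 2-dimensional real inner product space with orthonormal bases (a₁,a₂) and (b₁,b₂), and suppose 0 < ⟪a₁,b₁⟫² < 1. Let P_u denote the rank-one orthogonal projector onto a unit vector u. Then the expected post-probing opinion state ⟪a₁,b₁⟫²·P_{b₁} + ⟪a₁,b₂⟫²·P_{b₂} (= P_{b₁}∘P_{a₁}∘P_{b₁} + P_{b₂}∘P_{a₁}∘P_{b₂}) is not equal to the initial state P_{a₁}: the expected revised opinion differs from the initial opinion, so quantum opinion revision violates Bayesian plausibility. -/
open scoped RealInnerProductSpace

/-- The rank-one orthogonal projector onto the line spanned by `u`: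
`x ↦ ⟪x, u⟫ • u`. -/
noncomputable def rankOneProj {V : Type*} [NormedAddCommGroup V]
    [InnerProductSpace ℝ V] (u : V) : V →ₗ[ℝ] V where
  toFun x := ⟪x, u⟫ • u
  map_add' x y := by simp [inner_add_left, add_smul]
  map_smul' c x := by simp [real_inner_smul_left, smul_smul]

/-- If `0 < ⟪a₁,b₁⟫² < 1`, then the expected post-probing
opinion state `⟪a₁,b₁⟫² • P_{b₁} + ⟪a₁,b₂⟫² • P_{b₂}` differs from the
initial state `P_{a₁}`: quantum opinion revision violates Bayesian
plausibility. -/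
theorem expected_revised_opinion_ne_initial {V : Type*} [NormedAddCommGroup V]
    [InnerProductSpace ℝ V] (a b : OrthonormalBasis (Fin 2) ℝ V)
    (h0 : 0 < ⟪a 0, b 0⟫ ^ 2) (h1 : ⟪a 0, b 0⟫ ^ 2 < 1) :
    (⟪a 0, b 0⟫ ^ 2) • rankOneProj (b 0) + (⟪a 0, b 1⟫ ^ 2) • rankOneProj (b 1)
      ≠ rankOneProj (a 0) := by
  intro h
  have h00 : ⟪b 0, b 0⟫ = 1 := orthonormal_iff_ite.mp b.orthonormal 0 0 |>.trans (by simp)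
  have h01 : ⟪b 0, b 1⟫ = 0 := orthonormal_iff_ite.mp b.orthonormal 0 1 |>.trans (by simp)
  have hb := DFunLike.congr_fun h (b 0)
  simp only [LinearMap.add_apply, LinearMap.smul_apply, rankOneProj, LinearMap.coe_mk,
    AddHom.coe_mk, h00, h01, one_smul, zero_smul, smul_zero, add_zero] at hb
  -- hb : ⟪a 0, b 0⟫ ^ 2 • b 0 = ⟪b 0, a 0⟫ • a 0
  have h2 := congrArg (fun x => ⟪x, a 0⟫) hb
  have hna : ‖a 0‖ = 1 := a.orthonormal.1 0
  simp only [real_inner_smul_left, real_inner_self_eq_norm_sq, hna] at h2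
  rw [real_inner_comm (a 0) (b 0)] at h2
  -- h2 : c^2 * c = c * 1
  set c := ⟪a 0, b 0⟫ with hc
  have hcne : c ≠ 0 := by
    intro hz; rw [hz] at h0; simp at h0
  have h3 : c * (c ^ 2 - 1) = 0 := by ring_nf; nlinarith [h2]
  rcases mul_eq_zero.mp h3 with hz | hz
  · exact hcne hz
  · linarith
end
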